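/- Let μ be a Borel probability measure on ℝⁿ, σ > 0, g_σ the density of N(0, σ²I), and q(y) = ∫ g_σ(y − x) dμ(x) the density of Y = X + ε where X ∼ μ and ε ∼ N(0, σ²I) are independent. Define r*(y) = E[X | Y = y] = (∫ x · g_σ(y − x) dμ(x)) / q(y). Then r* minimizes the denoising objective E‖r(Y) − X‖² over all measurable square-integrable reconstructions r : ℝⁿ → ℝⁿ, and it satisfies the exact residual identity r*(y) − y = σ² ∇ log q(y) for every y ∈ ℝⁿ. Hence the residual of the optimal denoising autoencoder, divided by σ², equals the score ∇ log q of the noise-smoothed data distribution. -/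

import Mathlib

open MeasureTheory Real InnerProductSpace

/-!
Substituting `y = x + ε` turns the DAE objective into `∫ (∫ g(y - x) ‖r(y) - x‖² dμ(x)) dy`.
For each `y` the inner integral is a weighted least-squares problem in the single vector
`r(y)`, and a weighted mean satisfies the Pythagorean identity
`∫ w ‖v - x‖² = ∫ w ‖m - x‖² + (∫ w) ‖v - m‖²`, so `r*(y)` minimises it pointwise.
For the residual identity, differentiate `q` under the integral sign (the Gaussian and
`z ↦ g(z) ‖z‖` are bounded): since `∇g(z) = -g(z) z / σ²`,
`∇q(y) = (∫ g(y - x) x dμ(x) - q(y) y) / σ² = q(y) (r*(y) - y) / σ²`, and `∇ log q = ∇q / q`.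
-/

section WeightedMean

variable {α E : Type*} [MeasurableSpace α] {μ : Measure α}
  [NormedAddCommGroup E] [InnerProductSpace ℝ E] {w : α → ℝ} {f : α → E}

theorem mul_norm_sub_sq_sub_mul_norm_sub_sq (t : ℝ) (v m x : E) :
    t * ‖v - x‖ ^ 2 - t * ‖m - x‖ ^ 2 = t * ‖v - m‖ ^ 2 + 2 * ⟪v - m, t • m - t • x⟫_ℝ := by
  rw [← smul_sub, real_inner_smul_right, ← sub_add_sub_cancel v m x, norm_add_sq_real]
  ring

theorem integrable_mul_norm_sub_sq_sub_mul_norm_sub_sq (hw : Integrable w μ)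
    (hwf : Integrable (fun a => w a • f a) μ) (v m : E) :
    Integrable (fun a => w a * ‖v - f a‖ ^ 2 - w a * ‖m - f a‖ ^ 2) μ := by
  simp_rw [mul_norm_sub_sq_sub_mul_norm_sub_sq]
  exact (hw.mul_const _).add ((((hw.smul_const m).sub hwf).const_inner (v - m)).const_mul 2)

variable [CompleteSpace E]

theorem integral_mul_norm_sub_sq_sub_mul_norm_sub_sq (hw : Integrable w μ)
    (hwf : Integrable (fun a => w a • f a) μ) (v m : E) :
    ∫ a, (w a * ‖v - f a‖ ^ 2 - w a * ‖m - f a‖ ^ 2) ∂μ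
      = (∫ a, w a ∂μ) * ‖v - m‖ ^ 2
        + 2 * ⟪v - m, (∫ a, w a ∂μ) • m - ∫ a, w a • f a ∂μ⟫_ℝ := by
  have hcross : Integrable (fun a => w a • m - w a • f a) μ := (hw.smul_const m).sub hwf
  simp_rw [mul_norm_sub_sq_sub_mul_norm_sub_sq]
  rw [integral_add (hw.mul_const _) ((hcross.const_inner (v - m)).const_mul 2),
    integral_mul_const, integral_const_mul, integral_inner hcross,
    integral_sub (hw.smul_const m) hwf, integral_smul_const]

theorem lintegral_mul_norm_weightedMean_sub_sq_le (hw_nonneg : 0 ≤ w) (hw : Integrable w μ)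
    (hwf : Integrable (fun a => w a • f a) μ) (hf : AEStronglyMeasurable f μ)
    (hw_ne : ∫ a, w a ∂μ ≠ 0) (v : E) :
    ∫⁻ a, ENNReal.ofReal (w a) *
        ENNReal.ofReal (‖(∫ a, w a ∂μ)⁻¹ • (∫ a, w a • f a ∂μ) - f a‖ ^ 2) ∂μ
      ≤ ∫⁻ a, ENNReal.ofReal (w a) * ENNReal.ofReal (‖v - f a‖ ^ 2) ∂μ := by
  set m := (∫ a, w a ∂μ)⁻¹ • ∫ a, w a • f a ∂μ
  have hnonneg (u : E) : 0 ≤ᵐ[μ] fun a => w a * ‖u - f a‖ ^ 2 :=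
    .of_forall fun a => mul_nonneg (hw_nonneg a) (sq_nonneg _)
  simp_rw [← ENNReal.ofReal_mul (hw_nonneg _)]
  by_cases hv : ∫⁻ a, ENNReal.ofReal (w a * ‖v - f a‖ ^ 2) ∂μ = ⊤
  · exact hv ▸ le_top
  have hv_int : Integrable (fun a => w a * ‖v - f a‖ ^ 2) μ :=
    (lintegral_ofReal_ne_top_iff_integrable
      (hw.aestronglyMeasurable.mul ((continuous_const.sub continuous_id).norm.pow 2
        |>.comp_aestronglyMeasurable hf)) (hnonneg v)).mp hv
  have hdiff_int := integrable_mul_norm_sub_sq_sub_mul_norm_sub_sq hw hwf v m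
  have hm_int : Integrable (fun a => w a * ‖m - f a‖ ^ 2) μ :=
    (hv_int.sub hdiff_int).congr (.of_forall fun a => sub_sub_cancel _ _)
  have hdiff := integral_mul_norm_sub_sq_sub_mul_norm_sub_sq hw hwf v m
  rw [smul_inv_smul₀ hw_ne, sub_self, inner_zero_right, mul_zero, add_zero,
    integral_sub hv_int hm_int] at hdiff
  rw [← ofReal_integral_eq_lintegral_ofReal hv_int (hnonneg v),
    ← ofReal_integral_eq_lintegral_ofReal hm_int (hnonneg m)]
  refine ENNReal.ofReal_le_ofReal ?_
  linarith [mul_nonneg (integral_nonneg (μ := μ) hw_nonneg) (sq_nonneg ‖v - m‖)]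

end WeightedMean

theorem lintegral_prod_withDensity_add {G : Type*} [MeasurableSpace G] [AddCommGroup G]
    [MeasurableAdd₂ G] [MeasurableSub₂ G] (μ ν : Measure G) [SFinite μ] [SFinite ν]
    [ν.IsAddLeftInvariant] {ρ : G → ENNReal} (hρ : Measurable ρ) {F : G → G → ENNReal}
    (hF : Measurable (Function.uncurry F)) :
    ∫⁻ z, F z.1 (z.1 + z.2) ∂μ.prod (ν.withDensity ρ)
      = ∫⁻ y, ∫⁻ x, ρ (y - x) * F x y ∂μ ∂ν := by
  have hF' : Measurable fun z : G × G => F z.1 (z.1 + z.2) :=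
    hF.comp (measurable_fst.prodMk (measurable_fst.add measurable_snd))
  rw [lintegral_prod _ hF'.aemeasurable]
  have hshift (x : G) :
      ∫⁻ e, F x (x + e) ∂ν.withDensity ρ = ∫⁻ y, ρ (y - x) * F x y ∂ν := by
    have hm : Measurable fun e => F x (x + e) :=
      hF.comp (measurable_const.prodMk (measurable_const_add x))
    rw [lintegral_withDensity_eq_lintegral_mul _ hρ hm,
      ← lintegral_add_left_eq_self (fun y => ρ (y - x) * F x y) x]
    simp only [Pi.mul_apply, add_sub_cancel_left]
  simp_rw [hshift]
  exact lintegral_lintegral_swap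
    ((hρ.comp (measurable_snd.sub measurable_fst)).mul hF).aemeasurable

theorem HasGradientAt.log {F : Type*} [NormedAddCommGroup F] [InnerProductSpace ℝ F]
    [CompleteSpace F] {f : F → ℝ} {f' x : F} (hf : HasGradientAt f f' x) (hx : f x ≠ 0) :
    HasGradientAt (fun x => Real.log (f x)) ((f x)⁻¹ • f') x := by
  rw [hasGradientAt_iff_hasFDerivAt, map_smul]
  exact hf.hasFDerivAt.log hx

theorem mul_exp_neg_sq_div_le {σ : ℝ} (hσ : 0 < σ) (t : ℝ) :
    t * exp (-t ^ 2 / (2 * σ ^ 2)) ≤ σ := by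
  rw [neg_div, exp_neg, ← div_eq_mul_inv, div_le_iff₀ (exp_pos _)]
  have key : t ≤ σ * (t ^ 2 / (2 * σ ^ 2) + 1) := by
    rw [mul_add, mul_one, div_eq_mul_inv]
    field_simp
    nlinarith [sq_nonneg (t - σ)]
  exact key.trans (mul_le_mul_of_nonneg_left (add_one_le_exp _) hσ.le)

section GaussKernel

variable {E : Type*} [NormedAddCommGroup E] {c σ : ℝ}

noncomputable def gaussKernel (c σ : ℝ) (z : E) : ℝ := c * exp (-‖z‖ ^ 2 / (2 * σ ^ 2))

theorem gaussKernel_pos (hc : 0 < c) (z : E) : 0 < gaussKernel c σ z := by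
  unfold gaussKernel; positivity

theorem gaussKernel_nonneg (hc : 0 ≤ c) (z : E) : 0 ≤ gaussKernel c σ z := by
  unfold gaussKernel; positivity

theorem gaussKernel_le (hc : 0 ≤ c) (z : E) : gaussKernel c σ z ≤ c := by
  refine mul_le_of_le_one_right hc (exp_le_one_iff.mpr ?_)
  exact div_nonpos_of_nonpos_of_nonneg (by simp) (by positivity)

theorem gaussKernel_mul_norm_le (hc : 0 ≤ c) (hσ : 0 < σ) (z : E) :
    gaussKernel c σ z * ‖z‖ ≤ c * σ := by
  rw [gaussKernel, mul_assoc, mul_comm (exp _)]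
  exact mul_le_mul_of_nonneg_left (mul_exp_neg_sq_div_le hσ _) hc

theorem continuous_gaussKernel : Continuous (gaussKernel c σ : E → ℝ) := by
  unfold gaussKernel; fun_prop

theorem hasGradientAt_gaussKernel_sub [InnerProductSpace ℝ E] [CompleteSpace E] (x y : E) :
    HasGradientAt (fun y => gaussKernel c σ (y - x))
      ((-(σ ^ 2)⁻¹ * gaussKernel c σ (y - x)) • (y - x)) y := by
  have h := (((hasFDerivAt_id y).sub_const x).norm_sq.const_mul (-(2 * σ ^ 2)⁻¹)).exp.const_mul c
  rw [hasGradientAt_iff_hasFDerivAt]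
  refine (h.congr_fderiv ?_).congr_of_eventuallyEq (.of_forall fun y => ?_)
  · ext v
    simp only [gaussKernel, id_eq, map_sub, ContinuousLinearMap.comp_id, neg_smul, smul_neg,
      neg_apply, smul_apply, sub_apply, coe_innerSL_apply, nsmul_eq_mul, Nat.cast_ofNat,
      smul_eq_mul, map_smul, toDual_apply_apply]
    ring_nf
  · simp only [gaussKernel, id]
    ring_nf

variable [MeasurableSpace E] [BorelSpace E] (μ : Measure E) [IsFiniteMeasure μ]

theorem integrable_gaussKernel_sub (hc : 0 ≤ c) (y : E) :
    Integrable (fun x => gaussKernel c σ (y - x)) μ :=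
  .of_bound (continuous_gaussKernel.comp (continuous_const.sub continuous_id)).aestronglyMeasurable
    c (.of_forall fun x => by
      rw [Real.norm_of_nonneg (gaussKernel_nonneg hc _)]; exact gaussKernel_le hc _)

theorem integral_gaussKernel_sub_pos [NeZero μ] (hc : 0 < c) (y : E) :
    0 < ∫ x, gaussKernel c σ (y - x) ∂μ := by
  rw [integral_pos_iff_support_of_nonneg (fun x => gaussKernel_nonneg hc.le _)
    (integrable_gaussKernel_sub μ hc.le y)]
  simp [Function.support, (gaussKernel_pos hc _).ne', NeZero.ne μ]

variable [NormedSpace ℝ E] [SecondCountableTopology E]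

theorem integrable_gaussKernel_sub_smul_sub (hc : 0 ≤ c) (hσ : 0 < σ) (y : E) :
    Integrable (fun x => gaussKernel c σ (y - x) • (y - x)) μ :=
  .of_bound ((continuous_gaussKernel.comp (continuous_const.sub continuous_id)).smul
      (continuous_const.sub continuous_id)).aestronglyMeasurable
    (c * σ) (.of_forall fun x => by
      rw [norm_smul, Real.norm_of_nonneg (gaussKernel_nonneg hc _)]
      exact gaussKernel_mul_norm_le hc hσ _)

theorem integrable_gaussKernel_sub_smul (hc : 0 ≤ c) (hσ : 0 < σ) (y : E) :
    Integrable (fun x => gaussKernel c σ (y - x) • x) μ := by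
  refine (((integrable_gaussKernel_sub (σ := σ) μ hc y).smul_const y).sub
    (integrable_gaussKernel_sub_smul_sub μ hc hσ y)).congr (.of_forall fun x => ?_)
  simp [smul_sub]

theorem measurable_integral_gaussKernel_sub_smul :
    Measurable fun y => ∫ x, gaussKernel c σ (y - x) • x ∂μ :=
  (StronglyMeasurable.integral_prod_right'
    (f := fun p : E × E => gaussKernel c σ (p.1 - p.2) • p.2)
    ((continuous_gaussKernel.comp (continuous_fst.sub continuous_snd)).smul
      continuous_snd).stronglyMeasurable).measurable

end GaussKernel

section GaussianSmoothing

variable {E : Type*} [NormedAddCommGroup E] [InnerProductSpace ℝ E] [CompleteSpace E]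
  [MeasurableSpace E] [BorelSpace E] [SecondCountableTopology E]
  (μ : Measure E) [IsFiniteMeasure μ] {c σ : ℝ}

theorem hasGradientAt_integral_gaussKernel_sub (hc : 0 ≤ c) (hσ : 0 < σ) (y : E) :
    HasGradientAt (fun y => ∫ x, gaussKernel c σ (y - x) ∂μ)
      ((σ ^ 2)⁻¹ • ((∫ x, gaussKernel c σ (y - x) • x ∂μ)
        - (∫ x, gaussKernel c σ (y - x) ∂μ) • y)) y := by
  let v : E → E → E := fun y x => (-(σ ^ 2)⁻¹ * gaussKernel c σ (y - x)) • (y - x)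
  have hv_eq (y : E) : v y = fun x => (-(σ ^ 2)⁻¹) •
      (gaussKernel c σ (y - x) • y - gaussKernel c σ (y - x) • x) :=
    funext fun x => by simp only [v, mul_smul, smul_sub]
  have hv_int : Integrable (v y) μ := by
    rw [hv_eq]
    exact (((integrable_gaussKernel_sub (σ := σ) μ hc y).smul_const y).sub
      (integrable_gaussKernel_sub_smul μ hc hσ y)).smul (-(σ ^ 2)⁻¹)
  have hv_norm (y x : E) : ‖v y x‖ ≤ (σ ^ 2)⁻¹ * (c * σ) := by
    rw [norm_smul, norm_mul, norm_neg, norm_inv, norm_pow, Real.norm_of_nonneg hσ.le,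
      Real.norm_of_nonneg (gaussKernel_nonneg hc _), mul_assoc]
    exact mul_le_mul_of_nonneg_left (gaussKernel_mul_norm_le hc hσ _) (by positivity)
  have h := hasFDerivAt_integral_of_dominated_of_fderiv_le (μ := μ) (x₀ := y)
    (F' := fun y x => toDual ℝ E (v y x)) (bound := fun _ => (σ ^ 2)⁻¹ * (c * σ))
    Filter.univ_mem (.of_forall fun y => (integrable_gaussKernel_sub μ hc y).aestronglyMeasurable)
    (integrable_gaussKernel_sub μ hc y)
    ((toDual ℝ E).continuous.comp_aestronglyMeasurable hv_int.aestronglyMeasurable)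
    (.of_forall fun x y _ => by rw [LinearIsometryEquiv.norm_map]; exact hv_norm y x)
    (integrable_const _) (.of_forall fun x y _ => hasGradientAt_gaussKernel_sub x y)
  refine h.congr_fderiv (((toDual ℝ E).toLinearIsometry.integral_comp_comm (v y)).trans
    (congrArg (toDual ℝ E) ?_))
  rw [hv_eq, integral_smul, integral_sub ((integrable_gaussKernel_sub μ hc y).smul_const y)
    (integrable_gaussKernel_sub_smul μ hc hσ y), integral_smul_const, neg_smul, ← smul_neg,
    neg_sub]

end GaussianSmoothing

/-- Optimal denoising autoencoder. Let `μ` be a Borel probability measure on ℝⁿ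
(the data distribution), `σ > 0`, `g` the density of `N(0, σ²I)`, `ν` the Gaussian
noise measure (with density `g` w.r.t. Lebesgue measure), and
`q(y) = ∫ g(y − x) dμ(x)` the density of `Y = X + ε` for independent `X ∼ μ`,
`ε ∼ ν`. Then the conditional mean `r*(y) = (∫ g(y − x) • x dμ(x)) / q(y)` minimizes
the DAE objective `E‖r(X + ε) − X‖²` over all measurable square-integrable
reconstructions `r`, and satisfies the exact residual identity
`r*(y) − y = σ² ∇ log q(y)` for every `y`. -/
theorem optimal_dae_residual_is_score {n : ℕ}
    (μ : Measure (EuclideanSpace ℝ (Fin n))) [IsProbabilityMeasure μ]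
    (σ : ℝ) (hσ : 0 < σ)
    (g : EuclideanSpace ℝ (Fin n) → ℝ)
    (hg : ∀ z, g z = (2 * Real.pi * σ ^ 2) ^ (-(n : ℝ) / 2) *
      Real.exp (-‖z‖ ^ 2 / (2 * σ ^ 2)))
    (ν : Measure (EuclideanSpace ℝ (Fin n)))
    (hν : ν = volume.withDensity (fun z => ENNReal.ofReal (g z)))
    (q : EuclideanSpace ℝ (Fin n) → ℝ)
    (hq : ∀ y, q y = ∫ x, g (y - x) ∂μ)
    (rstar : EuclideanSpace ℝ (Fin n) → EuclideanSpace ℝ (Fin n))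
    (hrstar : ∀ y, rstar y = (q y)⁻¹ • ∫ x, g (y - x) • x ∂μ) :
    (∀ r : EuclideanSpace ℝ (Fin n) → EuclideanSpace ℝ (Fin n), Measurable r →
      MemLp (fun z : EuclideanSpace ℝ (Fin n) × EuclideanSpace ℝ (Fin n) =>
        r (z.1 + z.2)) 2 (μ.prod ν) →
      ∫⁻ z : EuclideanSpace ℝ (Fin n) × EuclideanSpace ℝ (Fin n),
          ENNReal.ofReal (‖rstar (z.1 + z.2) - z.1‖ ^ 2) ∂(μ.prod ν)
        ≤ ∫⁻ z : EuclideanSpace ℝ (Fin n) × EuclideanSpace ℝ (Fin n),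
          ENNReal.ofReal (‖r (z.1 + z.2) - z.1‖ ^ 2) ∂(μ.prod ν)) ∧
    (∀ y, rstar y - y = σ ^ 2 • gradient (fun z => Real.log (q z)) y) := by
  set c : ℝ := (2 * π * σ ^ 2) ^ (-(n : ℝ) / 2)
  have hc : 0 < c := by positivity
  obtain rfl : g = gaussKernel c σ := funext hg
  obtain rfl : q = fun y => ∫ x, gaussKernel c σ (y - x) ∂μ := funext hq
  have hq_pos := integral_gaussKernel_sub_pos (σ := σ) μ hc
  have hq_grad := hasGradientAt_integral_gaussKernel_sub μ hc.le hσ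
  refine ⟨fun r hr _ => ?_, fun y => ?_⟩
  · have hrstar_meas : Measurable rstar := by
      rw [funext hrstar]
      have hq_cont : Continuous fun y => ∫ x, gaussKernel c σ (y - x) ∂μ :=
        continuous_iff_continuousAt.2 fun y => (hq_grad y).hasFDerivAt.continuousAt
      exact hq_cont.measurable.inv.smul (measurable_integral_gaussKernel_sub_smul μ)
    have hρ : Measurable fun z => ENNReal.ofReal (gaussKernel c σ z) :=
      (continuous_gaussKernel (E := EuclideanSpace ℝ (Fin n))).measurable.ennreal_ofReal
    rw [hν,
      lintegral_prod_withDensity_add _ _ hρ (F := fun x y => ENNReal.ofReal (‖rstar y - x‖ ^ 2))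
        (by fun_prop),
      lintegral_prod_withDensity_add _ _ hρ (F := fun x y => ENNReal.ofReal (‖r y - x‖ ^ 2))
        (by fun_prop)]
    refine lintegral_mono fun y => ?_
    rw [hrstar]
    exact lintegral_mul_norm_weightedMean_sub_sq_le (fun x => gaussKernel_nonneg hc.le _)
      (integrable_gaussKernel_sub μ hc.le y) (integrable_gaussKernel_sub_smul μ hc.le hσ y)
      aestronglyMeasurable_id (hq_pos y).ne' (r y)
  · rw [((hq_grad y).log (hq_pos y).ne').gradient, hrstar]
    have hq_ne := (hq_pos y).ne'
    match_scalars <;> field_simp
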